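/- arXiv:0801.3373 — 2 statements merged into one kernel-verified Lean document; each statement's English description precedes it below -/
import Mathlib

section
/- Let I be a homogeneous ideal of R = K[x_1,...,x_n] with minimal generators in degrees d_1 < d_2 < ... < d_p. Then the union over all j ≥ o(I) of Ass(R/I_⟨j⟩) equals the union of Ass(R/I_⟨d_1⟩), ..., Ass(R/I_⟨d_p⟩), and {M}; in particular this union is finite. -/
/-!
If no minimal generator of `I` has degree `j + 1`, comparing homogeneous components gives
`I_⟨j+1⟩ = M I_⟨j⟩`. For any ideal `J`, the exact sequence
`0 → J/MJ → R/MJ → R/J → 0` has its left term killed by the maximal ideal `M`, so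
`Ass(R/MJ) ⊆ Ass(R/J) ∪ {M}`; induction on `j` starting at `o(I)` gives `⊆`.
Conversely, for `d = max D` a nonzero form of degree `d` in `I` lies in
`I_⟨d⟩ \ M I_⟨d⟩ = I_⟨d⟩ \ I_⟨d+1⟩` and is annihilated by `M` modulo `I_⟨d+1⟩`,
so `M ∈ Ass(R/I_⟨d+1⟩)`.
-/

open MvPolynomial

noncomputable section

/-- The polynomial ring `R = K[x_1,…,x_n]`. -/
abbrev Rn (K : Type) [Field K] (n : ℕ) : Type := MvPolynomial (Fin n) K

/-- The irrelevant maximal ideal `M = (x_1,…,x_n)`. -/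
def Mi (K : Type) [Field K] (n : ℕ) : Ideal (Rn K n) :=
  Ideal.span (Set.range (X : Fin n → Rn K n))

variable {K : Type} [Field K] {n : ℕ}

/-- `I` is a homogeneous ideal. -/
def IsHomog (I : Ideal (Rn K n)) : Prop :=
  ∀ f ∈ I, ∀ j : ℕ, homogeneousComponent j f ∈ I

/-- `I_⟨j⟩`, the ideal generated by the degree-`j` forms in `I`. -/
def comp (I : Ideal (Rn K n)) (j : ℕ) : Ideal (Rn K n) :=
  Ideal.span {f | f ∈ I ∧ f.IsHomogeneous j}

/-- The saturation `I^sat = I : M^∞`. -/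
def sat (I : Ideal (Rn K n)) : Ideal (Rn K n) :=
  ⨆ k : ℕ, I.colon ((Mi K n ^ k : Ideal (Rn K n)) : Set (Rn K n))

/-- `I : g^∞`. -/
def colonInfty (I : Ideal (Rn K n)) (g : Rn K n) : Ideal (Rn K n) :=
  ⨆ k : ℕ, I.colon (Ideal.span {g ^ k})

/-- The initial degree (order) `o(I)` of a homogeneous ideal. -/
def order (I : Ideal (Rn K n)) : ℕ :=
  sInf {j | ∃ f ∈ I, f ≠ 0 ∧ f.IsHomogeneous j}

/-- The quadratic extension `S = R[M/ℓ] = ∪_k M^k/ℓ^k ⊆ R_ℓ`. -/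
def quadExt (ℓ : Rn K n) : Subalgebra (Rn K n) (Localization.Away ℓ) :=
  Algebra.adjoin (Rn K n)
    {x | ∃ m ∈ Mi K n,
      x * algebraMap (Rn K n) (Localization.Away ℓ) ℓ =
        algebraMap (Rn K n) (Localization.Away ℓ) m}

/-- The contraction `IS ∩ R` of `I` from `S = R[M/ℓ]`. -/
def contraction (I : Ideal (Rn K n)) (ℓ : Rn K n) : Ideal (Rn K n) :=
  Ideal.comap (algebraMap (Rn K n) (quadExt ℓ))
    (Ideal.map (algebraMap (Rn K n) (quadExt ℓ)) I)

/-- `I` is contracted (from a quadratic extension). -/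
def IsContracted (I : Ideal (Rn K n)) : Prop :=
  ∃ ℓ : Rn K n, ℓ ≠ 0 ∧ ℓ.IsHomogeneous 1 ∧ I = contraction I ℓ

/-- `I` is `M`-full. -/
def IsMFull (I : Ideal (Rn K n)) : Prop :=
  ∃ ℓ : Rn K n, ℓ ≠ 0 ∧ ℓ.IsHomogeneous 1 ∧ (I * Mi K n).colon (Ideal.span {ℓ}) = I

/-- The minimal number of generators `μ(I)`. -/
def mu (I : Ideal (Rn K n)) : ℕ :=
  sInf {k | ∃ s : Finset (Rn K n), s.card = k ∧ Ideal.span (s : Set (Rn K n)) = I}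

/-- The integral closure of an ideal, as a set: elements satisfying an equation
`a^t + r_1 a^{t-1} + … + r_t = 0` with `r_i ∈ I^i`. -/
def intClo {A : Type} [CommRing A] (I : Ideal A) : Set A :=
  {a | ∃ (t : ℕ) (r : ℕ → A), 0 < t ∧ (∀ i, 1 ≤ i → i ≤ t → r i ∈ I ^ i) ∧
    a ^ t + ∑ i ∈ Finset.Icc 1 t, r i * a ^ (t - i) = 0}

/-- `I` is integrally closed. -/
def IsIC {A : Type} [CommRing A] (I : Ideal A) : Prop :=
  ∀ a ∈ intClo I, a ∈ I

/-- The class `C`: finite-colength homogeneous ideals with `I + (ℓ) = M^{o(I)} + (ℓ)`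
for some nonzero linear form `ℓ`, which are contracted. -/
def InC (I : Ideal (Rn K n)) : Prop :=
  IsHomog I ∧ (∃ m : ℕ, Mi K n ^ m ≤ I) ∧ IsContracted I ∧
    ∃ ℓ : Rn K n, ℓ ≠ 0 ∧ ℓ.IsHomogeneous 1 ∧
      I + Ideal.span {ℓ} = Mi K n ^ order I + Ideal.span {ℓ}

/-- `(b, dg, φ, π)` is a graded free resolution of the homogeneous ideal `J`:
the `i`-th free module has basis `Fin (b i)` with generators in degrees `dg i`,
the maps are given by matrices with homogeneous entries of the appropriate degrees,
and the complex is exact. -/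
def IsGradedRes (J : Ideal (Rn K n)) (b : ℕ → ℕ) (dg : (i : ℕ) → Fin (b i) → ℕ)
    (φ : (i : ℕ) → Matrix (Fin (b i)) (Fin (b (i + 1))) (Rn K n))
    (π : Fin (b 0) → Rn K n) : Prop :=
  (∀ c, π c ∈ J) ∧ (∀ c, (π c).IsHomogeneous (dg 0 c)) ∧
    J = Ideal.span (Set.range π) ∧
    (∀ i r c, (φ i) r c = 0 ∨ ∃ e, ((φ i) r c).IsHomogeneous e ∧ dg i r + e = dg (i + 1) c) ∧
    LinearMap.ker (Matrix.mulVecLin (Matrix.of fun (_ : Fin 1) c => π c)) =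
      LinearMap.range (Matrix.mulVecLin (φ 0)) ∧
    ∀ i, LinearMap.ker (Matrix.mulVecLin (φ i)) = LinearMap.range (Matrix.mulVecLin (φ (i + 1)))

/-- `reg J ≤ m`: `J` admits a graded free resolution with `i`-th shifts at most `m + i`. -/
def RegLE (J : Ideal (Rn K n)) (m : ℕ) : Prop :=
  ∃ b dg φ π, IsGradedRes J b dg φ π ∧ ∀ i c, dg i c ≤ m + i

/-- The Castelnuovo–Mumford regularity of a homogeneous ideal. -/
def regId (J : Ideal (Rn K n)) : ℕ := sInf {m | RegLE J m}

/-- `J` has a linear resolution (generated in degree `d` with `i`-th syzygies in degree `d+i`). -/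
def HasLinRes (J : Ideal (Rn K n)) (d : ℕ) : Prop :=
  ∃ b dg φ π, IsGradedRes J b dg φ π ∧ ∀ i c, dg i c = d + i

/-- `I` is componentwise linear. -/
def CompLinear (I : Ideal (Rn K n)) : Prop :=
  ∀ d : ℕ, HasLinRes (comp I d) d


namespace MvPolynomial

variable {σ R : Type*} [CommSemiring R]

theorem homogeneousComponent_add_mul_of_isHomogeneous {q : MvPolynomial σ R} {e : ℕ}
    (hq : q.IsHomogeneous e) (p : MvPolynomial σ R) (d : ℕ) :
    homogeneousComponent (d + e) (p * q) = homogeneousComponent d p * q := by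
  induction p using MvPolynomial.induction_on' with
  | monomial m c =>
    have hm := isHomogeneous_monomial (R := R) c (rfl : m.degree = m.degree)
    rw [homogeneousComponent_of_mem (hm.mul hq), homogeneousComponent_of_mem hm]
    by_cases h : d = m.degree <;> simp [h]
  | add p p' hp hp' => simp only [add_mul, map_add, hp, hp']

theorem idealOfVars_eq_ker_constantCoeff :
    idealOfVars σ R = RingHom.ker (constantCoeff : MvPolynomial σ R →+* R) := by
  ext p
  rw [← pow_one (idealOfVars σ R), mem_pow_idealOfVars_iff', RingHom.mem_ker, constantCoeff_eq]
  simp [Finsupp.degree_eq_zero_iff]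

instance isMaximal_idealOfVars {K : Type*} [Field K] : (idealOfVars σ K).IsMaximal := by
  rw [idealOfVars_eq_ker_constantCoeff]
  exact RingHom.ker_isMaximal_of_surjective _ fun k => ⟨C k, constantCoeff_C _ k⟩

theorem IsHomogeneous.mem_pow_idealOfVars {p : MvPolynomial σ R} {d : ℕ}
    (hp : p.IsHomogeneous d) : p ∈ idealOfVars σ R ^ d :=
  (mem_pow_idealOfVars_iff' d p).mpr fun _ hx => hp.coeff_eq_zero hx.ne

theorem IsHomogeneous.notMem_pow_idealOfVars_succ {p : MvPolynomial σ R} {d : ℕ}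
    (hp : p.IsHomogeneous d) (hp0 : p ≠ 0) : p ∉ idealOfVars σ R ^ (d + 1) := by
  rw [mem_pow_idealOfVars_iff']
  refine fun h => hp0 (MvPolynomial.ext _ _ fun x => ?_)
  by_cases hx : x.degree = d
  · exact h x (by omega)
  · exact hp.coeff_eq_zero hx

end MvPolynomial

section AssociatedPrimes

variable {R : Type*} [CommRing R] (m : Ideal R) [m.IsMaximal]

theorem associatedPrimes_quotient_mul_subset (J : Ideal R) :
    associatedPrimes R (R ⧸ m * J) ⊆ associatedPrimes R (R ⧸ J) ∪ {m} := by
  let N : Submodule R (R ⧸ m * J) := Submodule.map (m * J).mkQ J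
  have hexact := associatedPrimes.subset_union_of_exact N.injective_subtype
    (LinearMap.exact_subtype_mkQ N)
  rw [LinearEquiv.AssociatedPrimes.eq
    (Submodule.quotientQuotientEquivQuotient (m * J) J Ideal.mul_le_right), Set.union_comm]
    at hexact
  refine hexact.trans (Set.union_subset_union_right _ fun P hP => ?_)
  have hm_ann : m ≤ (⊤ : Submodule R N).annihilator := fun r hr =>
    Submodule.mem_annihilator.mpr fun ⟨_, x, hx, hxN⟩ _ => by
      subst hxN
      exact Subtype.ext ((Submodule.Quotient.mk_eq_zero _).mpr (Ideal.mul_mem_mul hr hx))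
  exact (Ideal.IsMaximal.eq_of_le ‹_› hP.isPrime.ne_top (hm_ann.trans hP.annihilator_le)).symm

variable {m} in
theorem mem_associatedPrimes_quotient_mul {J : Ideal R} (hJ : ¬ J ≤ m * J) :
    m ∈ associatedPrimes R (R ⧸ m * J) := by
  obtain ⟨x, hxJ, hx⟩ := Set.not_subset.mp hJ
  have hcolon : m = (⊥ : Submodule R (R ⧸ m * J)).colon {Ideal.Quotient.mk _ x} := by
    refine Ideal.IsMaximal.eq_of_le ‹_› (fun htop => hx ?_) fun r hr => ?_
    · have h1 : (1 : R) ∈ (⊥ : Submodule R (R ⧸ m * J)).colon {Ideal.Quotient.mk _ x} :=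
        htop ▸ Submodule.mem_top
      rwa [Submodule.mem_colon_singleton, one_smul, Submodule.mem_bot,
        Ideal.Quotient.eq_zero_iff_mem] at h1
    · rw [Submodule.mem_colon_singleton, Submodule.mem_bot]
      exact Ideal.Quotient.eq_zero_iff_mem.mpr (Ideal.mul_mem_mul hr hxJ)
  refine ⟨Ideal.IsMaximal.isPrime ‹_›, Ideal.Quotient.mk _ x, ?_⟩
  rw [← hcolon, (Ideal.IsMaximal.isPrime ‹_›).radical]

end AssociatedPrimes

section Components

instance isMaximal_Mi : (Mi K n).IsMaximal := isMaximal_idealOfVars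

/-- By graded Nakayama: no minimal generator of `I` has degree `d`. -/
def NoMinimalGeneratorsInDegree (I : Ideal (Rn K n)) (d : ℕ) : Prop :=
  ∀ f ∈ I, f.IsHomogeneous d → f ∈ Mi K n * I

variable {I : Ideal (Rn K n)}

theorem homogeneousComponent_succ_mem_Mi_mul_comp (hI : IsHomog I) {f : Rn K n}
    (hf : f ∈ Mi K n * I) (j : ℕ) : homogeneousComponent (j + 1) f ∈ Mi K n * comp I j := by
  rw [mul_comm] at hf ⊢
  obtain ⟨a, ha, rfl⟩ := (Submodule.mem_ideal_smul_span_iff_exists_sum I X f).mp hf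
  rw [map_finsuppSum]
  refine Submodule.finsuppSum_mem _ _ _ _ fun i _ => ?_
  rw [smul_eq_mul, homogeneousComponent_add_mul_of_isHomogeneous (isHomogeneous_X K i)]
  exact Ideal.mul_mem_mul
    (Ideal.subset_span ⟨hI _ (ha i) j, homogeneousComponent_isHomogeneous j _⟩)
    (Ideal.subset_span ⟨i, rfl⟩)

theorem Mi_mul_comp_le_comp_succ (I : Ideal (Rn K n)) (j : ℕ) :
    Mi K n * comp I j ≤ comp I (j + 1) := by
  rw [Mi, comp, Ideal.span_mul_span', Ideal.span_le]
  rintro _ ⟨_, ⟨i, rfl⟩, g, ⟨hgI, hg⟩, rfl⟩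
  exact Ideal.subset_span
    ⟨I.mul_mem_left _ hgI, by simpa [add_comm] using (isHomogeneous_X K i).mul hg⟩

theorem comp_succ_eq_Mi_mul (hI : IsHomog I) {j : ℕ}
    (h : NoMinimalGeneratorsInDegree I (j + 1)) : comp I (j + 1) = Mi K n * comp I j := by
  refine le_antisymm (Ideal.span_le.mpr fun f ⟨hfI, hfh⟩ => ?_) (Mi_mul_comp_le_comp_succ I j)
  simpa [homogeneousComponent_eq_self hfh] using
    homogeneousComponent_succ_mem_Mi_mul_comp hI (h f hfI hfh) j

theorem not_comp_le_Mi_mul_comp {f : Rn K n} {j : ℕ} (hfI : f ∈ I) (hf0 : f ≠ 0)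
    (hfh : f.IsHomogeneous j) : ¬ comp I j ≤ Mi K n * comp I j := fun hle => by
  have hpow : comp I j ≤ Mi K n ^ (j + 1) := calc
    comp I j ≤ Mi K n * comp I j := hle
    _ ≤ Mi K n * Mi K n ^ j :=
      Ideal.mul_mono_right (Ideal.span_le.mpr fun _ hg => hg.2.mem_pow_idealOfVars)
    _ = Mi K n ^ (j + 1) := (pow_succ' _ _).symm
  exact hfh.notMem_pow_idealOfVars_succ hf0 (hpow (Ideal.subset_span ⟨hfI, hfh⟩))

theorem exists_isHomogeneous_of_order_le (hI : IsHomog I) (hne : I ≠ ⊥) (hn : 0 < n) {j : ℕ}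
    (hj : order I ≤ j) : ∃ f ∈ I, f ≠ 0 ∧ f.IsHomogeneous j := by
  obtain ⟨f, hfI, hf0, hfh⟩ : ∃ f ∈ I, f ≠ 0 ∧ f.IsHomogeneous (order I) := by
    refine Nat.sInf_mem (s := {j | ∃ f ∈ I, f ≠ 0 ∧ f.IsHomogeneous j}) ?_
    obtain ⟨g, hgI, hg0⟩ := Submodule.exists_mem_ne_zero_of_ne_bot hne
    obtain ⟨x, hx⟩ := ne_zero_iff.mp hg0
    refine ⟨x.degree, _, hI g hgI _, fun h => hx ?_, homogeneousComponent_isHomogeneous _ _⟩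
    simpa [coeff_homogeneousComponent] using congrArg (coeff x) h
  refine ⟨X ⟨0, hn⟩ ^ (j - order I) * f, I.mul_mem_left _ hfI,
    mul_ne_zero (pow_ne_zero _ (X_ne_zero _)) hf0, ?_⟩
  simpa [show j - order I + order I = j by omega] using
    (isHomogeneous_X_pow (R := K) (⟨0, hn⟩ : Fin n) (j - order I)).mul hfh

end Components

theorem associatedPrimes_comp_subset {I : Ideal (Rn K n)} (hI : IsHomog I) {D : Set ℕ}
    (hD0 : order I ∈ D)
    (hD : ∀ j, order I ≤ j → j + 1 ∉ D → NoMinimalGeneratorsInDegree I (j + 1))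
    {j : ℕ} (hj : order I ≤ j) :
    associatedPrimes (Rn K n) (Rn K n ⧸ comp I j) ⊆
      (⋃ d ∈ D, associatedPrimes (Rn K n) (Rn K n ⧸ comp I d)) ∪ {Mi K n} := by
  induction j, hj using Nat.le_induction with
  | base => exact fun P hP => Or.inl (Set.mem_biUnion hD0 hP)
  | succ j hj ih =>
    by_cases hjD : j + 1 ∈ D
    · exact fun P hP => Or.inl (Set.mem_biUnion hjD hP)
    · rw [comp_succ_eq_Mi_mul hI (hD j hj hjD)]
      exact (associatedPrimes_quotient_mul_subset _ _).trans
        (Set.union_subset ih Set.subset_union_right)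

/-- if `I` has minimal generators exactly in the degrees of `D`, then
`⋃_{j ≥ o(I)} Ass(R/I_⟨j⟩) = (⋃_{d ∈ D} Ass(R/I_⟨d⟩)) ∪ {M}`. -/
theorem stmt2 (K : Type) [Field K] (n : ℕ) (hn : 0 < n)
    (I : Ideal (Rn K n)) (hI : IsHomog I) (hne : I ≠ ⊥)
    (D : Finset ℕ) (hDord : ∀ d ∈ D, order I ≤ d) (hD0 : order I ∈ D)
    (hD : ∀ j : ℕ, order I ≤ j →
      ((j + 1 ∈ D) ↔ ¬ (∀ f ∈ I, f.IsHomogeneous (j + 1) → f ∈ Mi K n * I))) :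
    (⋃ j ∈ Set.Ici (order I), associatedPrimes (Rn K n) (Rn K n ⧸ comp I j)) =
      (⋃ d ∈ (D : Set ℕ), associatedPrimes (Rn K n) (Rn K n ⧸ comp I d)) ∪ {Mi K n} := by
  have hnogen : ∀ j, order I ≤ j → j + 1 ∉ D → NoMinimalGeneratorsInDegree I (j + 1) :=
    fun j hj hjD => not_not.mp (mt (hD j hj).mpr hjD)
  set m := D.max' ⟨_, hD0⟩
  have hm : order I ≤ m := hDord _ (D.max'_mem _)
  have hmD : m + 1 ∉ D := fun h => by have := D.le_max' _ h; omega
  obtain ⟨f, hfI, hf0, hfh⟩ := exists_isHomogeneous_of_order_le hI hne hn hm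
  have hM : Mi K n ∈ associatedPrimes (Rn K n) (Rn K n ⧸ comp I (m + 1)) := by
    rw [comp_succ_eq_Mi_mul hI (hnogen m hm hmD)]
    exact mem_associatedPrimes_quotient_mul (not_comp_le_Mi_mul_comp hfI hf0 hfh)
  refine subset_antisymm
    (Set.iUnion₂_subset fun j hj => associatedPrimes_comp_subset hI hD0 hnogen hj)
    (Set.union_subset ?_ ?_)
  · exact Set.iUnion₂_mono' fun d hd => ⟨d, hDord d hd, subset_rfl⟩
  · exact Set.singleton_subset_iff.mpr (Set.mem_biUnion (Set.mem_Ici.mpr (by omega)) hM)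

end
end

section
/- Let I and J be homogeneous ideals of R = K[x_1,...,x_n] with I M-full, I ⊆ J, and I_t = J_t for all t sufficiently large. Then the minimal number of generators satisfies μ(I) ≥ μ(J). -/
open MvPolynomial

noncomputable section

variable {K : Type} [Field K] {n : ℕ}

/-!
Write `λ(A/B)` for the `K`-dimension of the image of `A` in `R/B` (`modImage B A`). The images of
generators of `I` span `I/IM` over `R/M = K`, so `λ(I/IM) ≤ μ(I)`; for homogeneous `J`, graded
Nakayama turns a homogeneous `K`-basis of `J/JM` into generators of `J`, so `μ(J) ≤ λ(J/JM)`.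
Multiplication by `ℓ` maps `J/IM` into `JM/IM`, and `M`-fullness says that its kernel lies in
`I/IM`; hence `λ(J/IM) ≤ λ(I/IM) + λ(JM/IM)`, that is `λ(J/JM) ≤ λ(I/IM)`. These lengths are
finite because `J/IM` is spanned by `I/IM` and the finitely many degrees where `I` and `J` may
differ.
-/

open Module

section LinearAlgebra

variable {K U V : Type*} [Field K] [AddCommGroup U] [Module K U] [AddCommGroup V] [Module K V]

theorem LinearMap.finrank_range_le_finrank_ker_of_range_le_ker [FiniteDimensional K U]
    (ψ : U →ₗ[K] V) (φ : U →ₗ[K] U) (h : LinearMap.range φ ≤ LinearMap.ker ψ) :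
    finrank K (LinearMap.range ψ) ≤ finrank K (LinearMap.ker φ) := by
  have hψ := LinearMap.finrank_range_add_finrank_ker ψ
  have hφ := LinearMap.finrank_range_add_finrank_ker φ
  have := Submodule.finrank_mono h
  omega

theorem Finset.exists_subset_card_le_finrank_span_image {α : Type*} [DecidableEq α]
    (H : Finset α) (v : α → V) :
    ∃ S ⊆ H, S.card ≤ finrank K (Submodule.span K (v '' H)) ∧
      Submodule.span K (v '' S) = Submodule.span K (v '' H) := by
  obtain ⟨κ, a, ha, hspan, hli⟩ := exists_linearIndependent' K fun h : (H : Set α) => v h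
  have : Fintype κ := @Fintype.ofFinite κ (Finite.of_injective a ha)
  have hrange : v '' (Finset.univ.image fun k => (a k : α) : Finset α) =
      Set.range ((fun h : (H : Set α) => v h) ∘ a) := by
    ext; simp
  refine ⟨Finset.univ.image fun k => (a k : α), fun x hx => ?_, ?_, ?_⟩
  · obtain ⟨k, -, rfl⟩ := Finset.mem_image.mp hx
    exact (a k).2
  · rw [Set.image_eq_range, ← hspan, finrank_span_eq_card hli]
    exact Finset.card_image_le.trans_eq Finset.card_univ
  · rw [hrange, hspan, Set.image_eq_range]

end LinearAlgebra

attribute [local instance] MvPolynomial.gradedAlgebra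

theorem mem_Mi_iff {f : Rn K n} : f ∈ Mi K n ↔ coeff 0 f = 0 := by
  simpa [Nat.lt_one_iff, Finsupp.degree_eq_zero_iff, Mi, idealOfVars] using
    mem_pow_idealOfVars_iff' 1 f

theorem mem_Mi_of_isHomogeneous {f : Rn K n} {d : ℕ} (hd : d ≠ 0) (hf : f.IsHomogeneous d) :
    f ∈ Mi K n :=
  mem_Mi_iff.mpr <| hf.coeff_eq_zero (by simpa using hd.symm)

theorem sub_C_coeff_zero_mem_Mi (f : Rn K n) : f - C (coeff 0 f) ∈ Mi K n :=
  mem_Mi_iff.mpr <| by simp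

theorem coe_decompose_eq_homogeneousComponent (f : Rn K n) (d : ℕ) :
    (DirectSum.decompose (homogeneousSubmodule (Fin n) K) f d : Rn K n) =
      homogeneousComponent d f :=
  decomposition.decompose'_apply f d

theorem isHomog_iff_isHomogeneous {I : Ideal (Rn K n)} :
    IsHomog I ↔ I.IsHomogeneous (homogeneousSubmodule (Fin n) K) := by
  refine ⟨fun h d f hf => ?_, fun h f hf d => ?_⟩
  · rw [coe_decompose_eq_homogeneousComponent]; exact h f hf d
  · rw [← coe_decompose_eq_homogeneousComponent]; exact h d hf

theorem isHomog_span {S : Set (Rn K n)} (hS : ∀ f ∈ S, ∃ d, f.IsHomogeneous d) :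
    IsHomog (Ideal.span S) :=
  isHomog_iff_isHomogeneous.mpr <| Ideal.homogeneous_span _ S hS

theorem homogeneousComponent_mul_of_isHomogeneous_right (p : Rn K n) {q : Rn K n} {e : ℕ}
    (hq : q.IsHomogeneous e) (d : ℕ) :
    homogeneousComponent d (p * q) =
      if e ≤ d then homogeneousComponent (d - e) p * q else 0 := by
  simp only [← coe_decompose_eq_homogeneousComponent]
  exact DirectSum.coe_decompose_mul_of_right_mem _ d hq

theorem span_homogeneous_mem_eq {J : Ideal (Rn K n)} (hJ : IsHomog J) :
    Ideal.span {f | f ∈ J ∧ ∃ d, f.IsHomogeneous d} = J := by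
  refine le_antisymm (Ideal.span_le.mpr fun f hf => hf.1) fun f hf => ?_
  rw [← sum_homogeneousComponent f]
  exact Ideal.sum_mem _ fun d _ =>
    Ideal.subset_span ⟨hJ f hf d, d, homogeneousComponent_isHomogeneous d f⟩

theorem exists_finset_isHomogeneous_span_eq {J : Ideal (Rn K n)} (hJ : IsHomog J) :
    ∃ H : Finset (Rn K n), (∀ f ∈ H, ∃ d, f.IsHomogeneous d) ∧ Ideal.span ↑H = J := by
  have hfg : (Ideal.span {f | f ∈ J ∧ ∃ d, f.IsHomogeneous d}).FG := by
    rw [span_homogeneous_mem_eq hJ]; exact IsNoetherian.noetherian J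
  obtain ⟨H, hHsub, hspan⟩ := (Submodule.fg_span_iff_fg_span_finset_subset _).mp hfg
  exact ⟨H, fun f hf => (hHsub hf).2, hspan.symm.trans (span_homogeneous_mem_eq hJ)⟩

theorem homogeneousComponent_mem_of_mem_mul_Mi {A N : Ideal (Rn K n)} (hA : IsHomog A) {d : ℕ}
    (hlow : ∀ e < d, ∀ f ∈ A, f.IsHomogeneous e → f ∈ N) {f : Rn K n} (hf : f ∈ A * Mi K n) :
    homogeneousComponent d f ∈ N := by
  refine Submodule.mul_induction_on hf (fun a ha m hm => ?_)
    (fun x y hx hy => by simpa using add_mem hx hy)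
  obtain ⟨c, rfl⟩ := (Ideal.mem_span_range_iff_exists_fun).mp hm
  simp only [Finset.mul_sum, ← mul_assoc, map_sum]
  refine Ideal.sum_mem _ fun i _ => ?_
  rw [homogeneousComponent_mul_of_isHomogeneous_right _ (isHomogeneous_X K i)]
  split_ifs with hd
  · exact Ideal.mul_mem_right _ _ <| hlow (d - 1) (by omega) _
      (hA _ (Ideal.mul_mem_right _ _ ha) _) (homogeneousComponent_isHomogeneous _ _)
  · exact N.zero_mem

theorem le_of_le_sup_mul_Mi {J N : Ideal (Rn K n)} (hJ : IsHomog J) (hN : IsHomog N)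
    (h : J ≤ N ⊔ J * Mi K n) : J ≤ N := by
  have hdeg : ∀ d, ∀ f ∈ J, f.IsHomogeneous d → f ∈ N := by
    intro d
    induction d using Nat.strong_induction_on with
    | _ d ih =>
      intro f hfJ hf
      obtain ⟨g, hg, k, hk, rfl⟩ := Submodule.mem_sup.mp (h hfJ)
      rw [← homogeneousComponent_eq_self hf, map_add]
      exact add_mem (hN g hg d) (homogeneousComponent_mem_of_mem_mul_Mi hJ ih hk)
  intro f hf
  rw [← sum_homogeneousComponent f]
  exact Ideal.sum_mem _ fun d _ => hdeg d _ (hJ f hf d) (homogeneousComponent_isHomogeneous d f)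

def modImage (N A : Ideal (Rn K n)) : Submodule K (Rn K n ⧸ N) :=
  (A.restrictScalars K).map (Ideal.Quotient.mkₐ K N).toLinearMap

theorem modImage_span_eq_span {s : Set (Rn K n)} {N : Ideal (Rn K n)}
    (h : Ideal.span s * Mi K n ≤ N) :
    modImage N (Ideal.span s) = Submodule.span K (Ideal.Quotient.mk N '' s) := by
  refine le_antisymm ?_ (Submodule.span_le.mpr ?_)
  · rintro _ ⟨f, hf, rfl⟩
    induction hf using Submodule.span_induction with
    | mem x hx => exact Submodule.subset_span ⟨x, hx, rfl⟩
    | zero => simp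
    | add x y _ _ hx hy => simpa using add_mem hx hy
    | smul a x hx ih =>
      have hdiff : a * x - C (coeff 0 a) * x ∈ N :=
        h (by convert Ideal.mul_mem_mul hx (sub_C_coeff_zero_mem_Mi a) using 1; ring)
      have hmod : Ideal.Quotient.mk N (a * x) = coeff 0 a • Ideal.Quotient.mk N x := by
        rw [Ideal.Quotient.eq.mpr hdiff, ← smul_eq_C_mul]
        exact map_smul (Ideal.Quotient.mkₐ K N) _ _
      simpa [hmod] using Submodule.smul_mem _ (coeff 0 a) ih
  · rintro _ ⟨f, hf, rfl⟩
    exact ⟨f, Ideal.subset_span hf, rfl⟩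

theorem exists_finset_card_eq_mu (I : Ideal (Rn K n)) :
    ∃ s : Finset (Rn K n), s.card = mu I ∧ Ideal.span ↑s = I := by
  obtain ⟨s, hs⟩ := IsNoetherian.noetherian I
  obtain ⟨t, ht, hspan⟩ := Nat.sInf_mem (s := {k | ∃ s : Finset (Rn K n), s.card = k ∧
    Ideal.span (s : Set (Rn K n)) = I}) ⟨s.card, s, rfl, hs⟩
  exact ⟨t, ht, hspan⟩

theorem mu_span_le_card (s : Finset (Rn K n)) : mu (Ideal.span (s : Set (Rn K n))) ≤ s.card :=
  Nat.sInf_le ⟨s, rfl, rfl⟩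

instance finiteDimensional_modImage (I : Ideal (Rn K n)) :
    FiniteDimensional K (modImage (I * Mi K n) I) := by
  obtain ⟨s, -, rfl⟩ := exists_finset_card_eq_mu I
  rw [modImage_span_eq_span le_rfl]
  exact FiniteDimensional.span_of_finite K (s.finite_toSet.image _)

theorem finrank_modImage_le_mu (I : Ideal (Rn K n)) :
    finrank K (modImage (I * Mi K n) I) ≤ mu I := by
  classical
  obtain ⟨s, hcard, rfl⟩ := exists_finset_card_eq_mu I
  rw [modImage_span_eq_span le_rfl, ← hcard, ← Finset.coe_image]
  exact (finrank_span_finset_le_card _).trans Finset.card_image_le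

theorem le_sup_mul_Mi_of_modImage_le {J N : Ideal (Rn K n)}
    (h : modImage (J * Mi K n) J ≤ modImage (J * Mi K n) N) : J ≤ N ⊔ J * Mi K n := by
  intro f hf
  obtain ⟨g, hg, hgf⟩ := h ⟨f, hf, rfl⟩
  have hfg : f - g ∈ J * Mi K n := Ideal.Quotient.eq.mp hgf.symm
  exact Submodule.mem_sup.mpr ⟨g, hg, f - g, hfg, add_sub_cancel g f⟩

theorem mu_le_finrank_modImage {J : Ideal (Rn K n)} (hJ : IsHomog J) :
    mu J ≤ finrank K (modImage (J * Mi K n) J) := by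
  classical
  obtain ⟨H, hHhom, hHJ⟩ := exists_finset_isHomogeneous_span_eq hJ
  set q := Ideal.Quotient.mk (J * Mi K n)
  obtain ⟨S, hSH, hcard, hspan⟩ := H.exists_subset_card_le_finrank_span_image (K := K) q
  have hHimage : modImage (J * Mi K n) J = Submodule.span K (q '' H) := by
    have := modImage_span_eq_span (N := J * Mi K n) (s := H) (by rw [hHJ])
    rwa [hHJ] at this
  have hSJ : Ideal.span ↑S ≤ J := hHJ ▸ Ideal.span_mono (Finset.coe_subset.mpr hSH)
  have hJS : J ≤ Ideal.span ↑S ⊔ J * Mi K n := le_sup_mul_Mi_of_modImage_le <| by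
    rw [hHimage, ← hspan, modImage_span_eq_span (Ideal.mul_mono_left hSJ)]
  have hS : Ideal.span ↑S = J :=
    le_antisymm hSJ <| le_of_le_sup_mul_Mi hJ (isHomog_span fun f hf => hHhom f (hSH hf)) hJS
  calc mu J ≤ S.card := hS ▸ mu_span_le_card S
    _ ≤ finrank K (modImage (J * Mi K n) J) := hHimage ▸ hcard

theorem finiteDimensional_modImage_of_forall_ge {I J : Ideal (Rn K n)} (hJ : IsHomog J) {t₀ : ℕ}
    (h : ∀ t ≥ t₀, ∀ f : Rn K n, f.IsHomogeneous t → f ∈ J → f ∈ I) :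
    FiniteDimensional K (modImage (I * Mi K n) J) := by
  have hle : J.restrictScalars K ≤ I.restrictScalars K ⊔ restrictTotalDegree (Fin n) K t₀ := by
    intro f hf
    rw [← sum_homogeneousComponent f]
    refine Submodule.sum_mem _ fun d _ => ?_
    by_cases hd : t₀ ≤ d
    · exact Submodule.mem_sup_left <|
        h d hd _ (homogeneousComponent_isHomogeneous d f) (hJ f hf d)
    · refine Submodule.mem_sup_right <| (mem_restrictTotalDegree _ _ _).mpr ?_
      exact (homogeneousComponent_isHomogeneous d f).totalDegree_le.trans (by omega)
  have hmap : modImage (I * Mi K n) J ≤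
      modImage (I * Mi K n) I ⊔ (restrictTotalDegree (Fin n) K t₀).map
        (Ideal.Quotient.mkₐ K (I * Mi K n)).toLinearMap := by
    rw [modImage, modImage, ← Submodule.map_sup]
    exact Submodule.map_mono hle
  exact Submodule.finiteDimensional_of_le hmap

theorem finrank_modImage_le_of_colon_eq {I J : Ideal (Rn K n)} (hle : I ≤ J) {ℓ : Rn K n}
    (hℓ : ℓ ∈ Mi K n) (hcolon : (I * Mi K n).colon (Ideal.span {ℓ}) = I)
    [FiniteDimensional K (modImage (I * Mi K n) J)] :
    finrank K (modImage (J * Mi K n) J) ≤ finrank K (modImage (I * Mi K n) I) := by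
  set A := modImage (I * Mi K n) J
  let ψ : A →ₗ[K] Rn K n ⧸ (J * Mi K n) :=
    (Ideal.Quotient.factorₐ K (Ideal.mul_mono_left hle)).toLinearMap ∘ₗ A.subtype
  have hA : ∀ x ∈ A, Ideal.Quotient.mk _ ℓ * x ∈ A := by
    rintro _ ⟨f, hf, rfl⟩
    exact ⟨ℓ * f, J.mul_mem_left ℓ hf, rfl⟩
  let φ : A →ₗ[K] A := (LinearMap.mulLeft K (Ideal.Quotient.mk _ ℓ)).restrict hA
  have hrange : LinearMap.range ψ = modImage (J * Mi K n) J := by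
    rw [LinearMap.range_comp, Submodule.range_subtype]
    exact (Submodule.map_comp (Ideal.Quotient.mkₐ K (I * Mi K n)).toLinearMap _ _).symm
  have hφψ : LinearMap.range φ ≤ LinearMap.ker ψ := by
    rintro _ ⟨⟨_, f, hf, rfl⟩, rfl⟩
    show Ideal.Quotient.mk (J * Mi K n) (ℓ * f) = 0
    exact Ideal.Quotient.eq_zero_iff_mem.mpr (mul_comm f ℓ ▸ Ideal.mul_mem_mul hf hℓ)
  have hker : (LinearMap.ker φ).map A.subtype ≤ modImage (I * Mi K n) I := by
    rintro _ ⟨⟨_, f, hf, rfl⟩, hx, rfl⟩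
    have hℓf : ℓ * f ∈ I * Mi K n := Ideal.Quotient.eq_zero_iff_mem.mp (congrArg Subtype.val hx)
    exact ⟨f, hcolon ▸ Ideal.mem_colon_span_singleton.mpr (mul_comm ℓ f ▸ hℓf), rfl⟩
  calc finrank K (modImage (J * Mi K n) J) = finrank K (LinearMap.range ψ) := by rw [hrange]
    _ ≤ finrank K (LinearMap.ker φ) :=
      LinearMap.finrank_range_le_finrank_ker_of_range_le_ker ψ φ hφψ
    _ = finrank K ((LinearMap.ker φ).map A.subtype) := (Submodule.finrank_map_subtype_eq _ _).symm
    _ ≤ finrank K (modImage (I * Mi K n) I) := Submodule.finrank_mono hker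

theorem stmt9_general (K : Type) [Field K] (n : ℕ) (I J : Ideal (Rn K n))
    (hJ : IsHomog J) (hfull : IsMFull I) (hle : I ≤ J)
    (heq : ∃ t0 : ℕ, ∀ t ≥ t0, ∀ f : Rn K n, f.IsHomogeneous t → (f ∈ I ↔ f ∈ J)) :
    mu J ≤ mu I := by
  obtain ⟨t₀, ht₀⟩ := heq
  obtain ⟨ℓ, -, hℓ, hcolon⟩ := hfull
  have := finiteDimensional_modImage_of_forall_ge hJ fun t ht f hf => (ht₀ t ht f hf).mpr
  calc mu J ≤ finrank K (modImage (J * Mi K n) J) := mu_le_finrank_modImage hJ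
    _ ≤ finrank K (modImage (I * Mi K n) I) :=
      finrank_modImage_le_of_colon_eq hle (mem_Mi_of_isHomogeneous one_ne_zero hℓ) hcolon
    _ ≤ mu I := finrank_modImage_le_mu I

/-- if `I` is `M`-full, `I ⊆ J` and `I_t = J_t` for `t ≫ 0`,
then `μ(I) ≥ μ(J)`. -/
theorem stmt9 (K : Type) [Field K] (n : ℕ) (I J : Ideal (Rn K n))
    (hI : IsHomog I) (hJ : IsHomog J) (hfull : IsMFull I) (hle : I ≤ J)
    (heq : ∃ t0 : ℕ, ∀ t ≥ t0, ∀ f : Rn K n, f.IsHomogeneous t → (f ∈ I ↔ f ∈ J)) :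
    mu J ≤ mu I :=
  stmt9_general K n I J hJ hfull hle heq

end
end
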